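/- Let H be an FH-algebra over a commutative ring k with antipode S, right distinguished group-like element m ∈ H* (the right modular function) and right distinguished group-like element b ∈ H. Then for every a ∈ H, S⁴(a) = b (m^{-1} ⇀ a ↼ m) b^{-1}. -/

import Mathlib

/-!
The right norm `t` turns `Δ(t)` into dual bases for the Frobenius form `f`. Computing the
Nakayama automorphism of `f` with them in two ways gives `f(x y) = f(y · b⁻¹ S²(m ⇀ x) b)`
(from the distinguished group-like `b`) and `f(x y) = f((S²(y) ↼ m⁻¹) x)` (from `f` being a right
integral). By nondegeneracy of `f` the two maps are mutually inverse; acting by `m` and putting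
`x = m⁻¹ ⇀ a` gives `S⁴(a) = b (m⁻¹ ⇀ a ↼ m) b⁻¹`.
-/

open TensorProduct

/-- `(φ, x, y)` is a Frobenius system for the `k`-algebra `A`. -/
def IsFrobeniusSystem (k : Type*) [CommRing k] (A : Type*) [Ring A] [Algebra k A]
    (φ : A →ₗ[k] k) {n : ℕ} (x y : Fin n → A) : Prop :=
  ∀ a : A, (∑ i, φ (y i * a) • x i = a) ∧ (∑ i, φ (a * x i) • y i = a)

/-- The convolution product on the dual `H*`: `(conv f g) a = ∑ f(a₁) g(a₂)`. -/
noncomputable def conv (k : Type*) [CommRing k] (H : Type*) [AddCommGroup H] [Module k H]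
    [Coalgebra k H] (f g : H →ₗ[k] k) : H →ₗ[k] k :=
  (LinearMap.mul' k k) ∘ₗ (TensorProduct.map f g) ∘ₗ (Coalgebra.comul (R := k))

/-- The right action of `H*` on `H`: `a ↼ g = ∑ g(a₁) a₂`. -/
noncomputable def rAct (k : Type*) [CommRing k] (H : Type*) [AddCommGroup H] [Module k H]
    [Coalgebra k H] (g : H →ₗ[k] k) (a : H) : H :=
  (TensorProduct.lid k H) ((TensorProduct.map g LinearMap.id) (Coalgebra.comul (R := k) a))

/-- The left action of `H*` on `H`: `g ⇀ a = ∑ a₁ g(a₂)`. -/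
noncomputable def lAct (k : Type*) [CommRing k] (H : Type*) [AddCommGroup H] [Module k H]
    [Coalgebra k H] (g : H →ₗ[k] k) (a : H) : H :=
  (TensorProduct.rid k H) ((TensorProduct.map LinearMap.id g) (Coalgebra.comul (R := k) a))

open Coalgebra HopfAlgebra WithConv

namespace IsFrobeniusSystem

variable {k A : Type*} [CommRing k] [Ring A] [Algebra k A] {φ : A →ₗ[k] k} {n : ℕ}
  {x y : Fin n → A}

theorem eq_of_forall_apply_mul_right_eq (hsys : IsFrobeniusSystem k A φ x y) {c c' : A}
    (h : ∀ z, φ (c * z) = φ (c' * z)) : c = c' := by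
  rw [← (hsys c).2, ← (hsys c').2]
  simp only [h]

theorem eq_of_forall_apply_mul_left_eq (hsys : IsFrobeniusSystem k A φ x y) {c c' : A}
    (h : ∀ z, φ (z * c) = φ (z * c')) : c = c' := by
  rw [← (hsys c).1, ← (hsys c').1]
  simp only [h]

theorem apply_mul_eq_apply_mul_sum (hsys : IsFrobeniusSystem k A φ x y) {ι : Type*}
    {s : Finset ι} {u v : ι → A} (huv : ∀ c, ∑ j ∈ s, φ (v j * c) • u j = c) (a c : A) :
    φ (a * c) = φ (c * ∑ j ∈ s, φ (a * v j) • u j) := by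
  -- A one-sided dual basis for a nondegenerate form is two-sided.
  have hvu : ∀ c, ∑ j ∈ s, φ (c * u j) • v j = c := fun c ↦
    hsys.eq_of_forall_apply_mul_right_eq fun z ↦ by
      conv_rhs => rw [← huv z]
      simp only [Finset.sum_mul, Finset.mul_sum, map_sum, smul_mul_assoc, mul_smul_comm,
        map_smul, smul_eq_mul, mul_comm]
  conv_lhs => rw [← hvu c]
  simp only [Finset.mul_sum, map_sum, mul_smul_comm, map_smul, smul_eq_mul, mul_comm]

theorem apply_mul_eq_apply_sum_mul (hsys : IsFrobeniusSystem k A φ x y) {ι : Type*}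
    {s : Finset ι} {u v : ι → A} (huv : ∀ c, ∑ j ∈ s, φ (c * u j) • v j = c) (a c : A) :
    φ (a * c) = φ ((∑ j ∈ s, φ (u j * c) • v j) * a) := by
  have hvu : ∀ c, ∑ j ∈ s, φ (v j * c) • u j = c := fun c ↦
    hsys.eq_of_forall_apply_mul_left_eq fun z ↦ by
      conv_rhs => rw [← huv z]
      simp only [Finset.sum_mul, Finset.mul_sum, map_sum, smul_mul_assoc, mul_smul_comm,
        map_smul, smul_eq_mul, mul_comm]
  conv_lhs => rw [← hvu a]
  simp only [Finset.sum_mul, map_sum, smul_mul_assoc, map_smul, smul_eq_mul, mul_comm]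

end IsFrobeniusSystem

section Actions

variable {k H : Type*} [CommRing k] [AddCommGroup H] [Module k H] [Coalgebra k H]
  {g h : H →ₗ[k] k}

theorem conv_eq_ofConv_convMul :
    conv k H g h = (toConv g * toConv h).ofConv :=
  rfl

theorem rAct_eq_sum {a : H} {ι : Type*} (r : Repr k a ι) :
    rAct k H g a = ∑ i ∈ r.index, g (r.left i) • r.right i := by
  simp [rAct, ← r.eq]

theorem lAct_eq_sum {a : H} {ι : Type*} (r : Repr k a ι) :
    lAct k H g a = ∑ i ∈ r.index, g (r.right i) • r.left i := by
  simp [lAct, ← r.eq]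

theorem rAct_sum_smul {ι : Type*} (s : Finset ι) (c : ι → k) (u : ι → H) :
    rAct k H g (∑ i ∈ s, c i • u i) = ∑ i ∈ s, c i • rAct k H g (u i) := by
  simp [rAct]

theorem rAct_counit (a : H) : rAct k H counit a = a :=
  (rAct_eq_sum (ℛ k a)).trans (sum_counit_smul _)

theorem lAct_counit (a : H) : lAct k H counit a = a := by
  simpa only [map_sum, TensorProduct.rid_tmul, one_smul, lAct_eq_sum (ℛ k a)]
    using congr(TensorProduct.rid k H $(sum_tmul_counit_eq (ℛ k a)))

theorem lAct_sum_smul {ι : Type*} (s : Finset ι) (c : ι → k) (u : ι → H) :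
    lAct k H g (∑ i ∈ s, c i • u i) = ∑ i ∈ s, c i • lAct k H g (u i) := by
  simp [lAct]

theorem rAct_rAct (a : H) : rAct k H g (rAct k H h a) = rAct k H (conv k H h g) a := by
  let r := ℛ k a
  have hc := congr(TensorProduct.lid k H (TensorProduct.map h
    (TensorProduct.lid k H ∘ₗ TensorProduct.map g LinearMap.id)
    $(sum_tmul_tmul_eq r (fun i ↦ ℛ k (r.left i)) (fun i ↦ ℛ k (r.right i)))))
  simp only [map_sum, TensorProduct.map_tmul, LinearMap.comp_apply, LinearEquiv.coe_coe,
    TensorProduct.lid_tmul, LinearMap.id_apply, smul_smul] at hc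
  rw [rAct_eq_sum r, rAct_sum_smul, rAct_eq_sum r]
  simp only [rAct_eq_sum (ℛ k (r.right _)), Finset.smul_sum, smul_smul, ← hc, conv,
    LinearMap.comp_apply, ← (ℛ k (r.left _)).eq, map_sum, TensorProduct.map_tmul,
    LinearMap.mul'_apply, Finset.sum_smul]

theorem lAct_lAct (a : H) : lAct k H g (lAct k H h a) = lAct k H (conv k H g h) a := by
  let r := ℛ k a
  have hc := congr(TensorProduct.rid k H (TensorProduct.map LinearMap.id
    (LinearMap.mul' k k ∘ₗ TensorProduct.map g h)
    $(sum_tmul_tmul_eq r (fun i ↦ ℛ k (r.left i)) (fun i ↦ ℛ k (r.right i)))))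
  simp only [map_sum, TensorProduct.map_tmul, LinearMap.comp_apply, LinearMap.mul'_apply,
    TensorProduct.rid_tmul, LinearMap.id_apply] at hc
  rw [lAct_eq_sum r, lAct_sum_smul, lAct_eq_sum r]
  simp only [lAct_eq_sum (ℛ k (r.left _)), Finset.smul_sum, smul_smul, mul_comm (h _), hc,
    conv, LinearMap.comp_apply, ← (ℛ k (r.right _)).eq, map_sum, TensorProduct.map_tmul,
    LinearMap.mul'_apply, Finset.sum_smul]

end Actions

section Integrals

variable {k H : Type*} [CommRing k] [Ring H] [HopfAlgebra k H] {f : H →ₗ[k] k}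

theorem rAct_mulRight_eq_antipode_rAct_mulLeft (hf : ∀ a, rAct k H f a = f a • 1) (x y : H) :
    rAct k H (f ∘ₗ LinearMap.mulRight k y) x =
      antipode k (rAct k H (f ∘ₗ LinearMap.mulLeft k x) y) := by
  -- Coassociativity enters only through associativity of the convolution product.
  let r := ℛ k x
  let A : H →ₗ[k] H := ∑ i ∈ r.index, (f ∘ₗ LinearMap.mulLeft k (r.left i)).smulRight (r.right i)
  have hA : ∀ y, A y = rAct k H (f ∘ₗ LinearMap.mulRight k y) x := fun y ↦ by
    simp [A, rAct_eq_sum r, LinearMap.sum_apply]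
  have hAid : toConv A * toConv LinearMap.id =
      toConv ((f ∘ₗ LinearMap.mulLeft k x).smulRight 1) := by
    ext y
    rw [(ℛ k y).convMul_apply]
    simpa [A, LinearMap.sum_apply, ← hf, rAct_eq_sum (r.mul (ℛ k y)), Finset.sum_product,
      Finset.sum_mul] using Finset.sum_comm
  calc rAct k H (f ∘ₗ LinearMap.mulRight k y) x
      = (toConv A * (toConv LinearMap.id * toConv (antipode k)) : WithConv (H →ₗ[k] H)) y := by
        rw [LinearMap.id_mul_antipode, mul_one, hA]
    _ = (toConv ((f ∘ₗ LinearMap.mulLeft k x).smulRight 1) * toConv (antipode k) :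
        WithConv (H →ₗ[k] H)) y := by
        rw [← mul_assoc, hAid]
    _ = antipode k (rAct k H (f ∘ₗ LinearMap.mulLeft k x) y) := by
        simp [(ℛ k y).convMul_apply, rAct_eq_sum (ℛ k y)]

theorem lAct_mulLeft_eq_antipode_lAct_mulRight_mul {b : H} (hf : ∀ a, lAct k H f a = f a • b)
    (x y : H) :
    lAct k H (f ∘ₗ LinearMap.mulLeft k x) y =
      antipode k (lAct k H (f ∘ₗ LinearMap.mulRight k y) x) * b := by
  let r := ℛ k y
  let E : H →ₗ[k] H := ∑ j ∈ r.index, (f ∘ₗ LinearMap.mulRight k (r.right j)).smulRight (r.left j)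
  have hE : ∀ x, E x = lAct k H (f ∘ₗ LinearMap.mulLeft k x) y := fun x ↦ by
    simp [E, lAct_eq_sum r, LinearMap.sum_apply]
  have hidE : toConv LinearMap.id * toConv E =
      toConv ((f ∘ₗ LinearMap.mulRight k y).smulRight b) := by
    ext x
    rw [(ℛ k x).convMul_apply]
    simp [E, LinearMap.sum_apply, ← hf, lAct_eq_sum ((ℛ k x).mul r), Finset.sum_product,
      Finset.mul_sum]
  calc lAct k H (f ∘ₗ LinearMap.mulLeft k x) y
      = ((toConv (antipode k) * toConv LinearMap.id) * toConv E : WithConv (H →ₗ[k] H)) x := by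
        rw [LinearMap.antipode_mul_id, one_mul, hE]
    _ = (toConv (antipode k) * toConv ((f ∘ₗ LinearMap.mulRight k y).smulRight b) :
        WithConv (H →ₗ[k] H)) x := by
        rw [mul_assoc, hidE]
    _ = antipode k (lAct k H (f ∘ₗ LinearMap.mulRight k y) x) * b := by
        simp [(ℛ k x).convMul_apply, lAct_eq_sum (ℛ k x), Finset.sum_mul]

end Integrals

section Characters

variable {k H : Type*} [CommRing k] [Ring H] [HopfAlgebra k H] (χ : H →ₐ[k] k)

theorem conv_comp_antipode_eq_counit :
    conv k H χ.toLinearMap (χ.toLinearMap ∘ₗ antipode k) = counit := by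
  have h := LinearMap.algHom_comp_convMul_distrib χ (toConv LinearMap.id) (toConv (antipode k))
  simp only [LinearMap.id_mul_antipode, LinearMap.comp_id] at h
  rw [conv_eq_ofConv_convMul, ← h]
  ext a
  simp

theorem comp_antipode_conv_eq_counit :
    conv k H (χ.toLinearMap ∘ₗ antipode k) χ.toLinearMap = counit := by
  have h := LinearMap.algHom_comp_convMul_distrib χ (toConv (antipode k)) (toConv LinearMap.id)
  simp only [LinearMap.antipode_mul_id, LinearMap.comp_id] at h
  rw [conv_eq_ofConv_convMul, ← h]
  ext a
  simp

theorem rAct_comp_antipode_rAct (a : H) :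
    rAct k H (χ.toLinearMap ∘ₗ antipode k) (rAct k H χ.toLinearMap a) = a := by
  rw [rAct_rAct, conv_comp_antipode_eq_counit, rAct_counit]

theorem rAct_rAct_comp_antipode (a : H) :
    rAct k H χ.toLinearMap (rAct k H (χ.toLinearMap ∘ₗ antipode k) a) = a := by
  rw [rAct_rAct, comp_antipode_conv_eq_counit, rAct_counit]

theorem lAct_lAct_comp_antipode (a : H) :
    lAct k H χ.toLinearMap (lAct k H (χ.toLinearMap ∘ₗ antipode k) a) = a := by
  rw [lAct_lAct, conv_comp_antipode_eq_counit, lAct_counit]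

end Characters

section FrobeniusHopf

variable {k H : Type*} [CommRing k] [Ring H] [HopfAlgebra k H] {f : H →ₗ[k] k} {n : ℕ}
  {x y : Fin n → H}

theorem lAct_eq_smul_of_conv_eq (hsys : IsFrobeniusSystem k H f x y) {b : H}
    (hb : ∀ (g : H →ₗ[k] k) (c : H), conv k H g f c = g b * f c) (c : H) :
    lAct k H f c = f c • b := by
  refine hsys.eq_of_forall_apply_mul_left_eq fun z ↦ ?_
  have h := hb (f ∘ₗ LinearMap.mulLeft k z) c
  rw [conv_eq_ofConv_convMul, (ℛ k c).convMul_apply] at h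
  simpa [lAct_eq_sum (ℛ k c), Finset.mul_sum, mul_comm] using h

variable {t : H} (ht : ∀ a, f (t * a) = counit (R := k) a)
include ht

theorem apply_norm : f t = 1 := by
  simpa using ht 1

theorem norm_mul_eq_counit_smul (hsys : IsFrobeniusSystem k H f x y) (c : H) :
    t * c = counit (R := k) c • t :=
  hsys.eq_of_forall_apply_mul_right_eq fun z ↦ by
    simp [mul_assoc, ht, Bialgebra.counit_mul]

theorem apply_mul_norm_mul (hsys : IsFrobeniusSystem k H f x y) (u v : H) :
    f (u * v * t) = f (u * t) * f (v * t) := by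
  have hv : v * t = f (v * t) • t := hsys.eq_of_forall_apply_mul_right_eq fun z ↦ by
    simp [mul_assoc, norm_mul_eq_counit_smul ht hsys, apply_norm ht, mul_comm]
  conv_lhs => rw [mul_assoc, hv, mul_smul_comm, map_smul, smul_eq_mul, mul_comm]

theorem apply_mul_eq_apply_mul_antipode_lAct (hsys : IsFrobeniusSystem k H f x y) {b : H}
    (hb : ∀ c, lAct k H f c = f c • b) {χ : H →ₐ[k] k} (hχ : ∀ a, χ a = f (a * t)) (a c : H) :
    f (a * c) = f (c * (antipode k (antipode k (lAct k H χ.toLinearMap a) * b) * b)) := by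
  have hft : f ∘ₗ LinearMap.mulLeft k t = counit := LinearMap.ext ht
  have hfχ : f ∘ₗ LinearMap.mulRight k t = χ.toLinearMap := LinearMap.ext fun a ↦ (hχ a).symm
  let r := ℛ k t
  have hdual : ∀ c, ∑ j ∈ r.index, f (r.right j * c) • (antipode k (r.left j) * b) = c :=
    fun c ↦ by
      have h := lAct_mulLeft_eq_antipode_lAct_mulRight_mul hb t c
      rw [hft, lAct_counit, lAct_eq_sum r] at h
      simpa [map_sum, Finset.sum_mul, smul_mul_assoc] using h.symm
  have h := lAct_mulLeft_eq_antipode_lAct_mulRight_mul hb a t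
  rw [hfχ, lAct_eq_sum r] at h
  rw [hsys.apply_mul_eq_apply_mul_sum hdual, ← h]
  simp [map_sum, Finset.sum_mul]

theorem apply_mul_eq_apply_rAct_antipode_mul (hsys : IsFrobeniusSystem k H f x y)
    (hf : ∀ a, rAct k H f a = f a • 1) {χ : H →ₐ[k] k} (hχ : ∀ a, χ a = f (a * t)) (a c : H) :
    f (a * c) =
      f (rAct k H (χ.toLinearMap ∘ₗ antipode k) (antipode k (antipode k c)) * a) := by
  have hft : f ∘ₗ LinearMap.mulLeft k t = counit := LinearMap.ext ht
  have hfχ : f ∘ₗ LinearMap.mulRight k t = χ.toLinearMap := LinearMap.ext fun a ↦ (hχ a).symm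
  let r := ℛ k t
  have hdual : ∀ c, ∑ j ∈ r.index,
      f (c * r.left j) • rAct k H (χ.toLinearMap ∘ₗ antipode k) (antipode k (r.right j)) = c :=
    fun c ↦ by
      have h := rAct_mulRight_eq_antipode_rAct_mulLeft hf c t
      rw [hfχ, rAct_eq_sum r] at h
      conv_rhs => rw [← rAct_comp_antipode_rAct χ c, h]
      simp [map_sum, rAct_sum_smul]
  have h := rAct_mulRight_eq_antipode_rAct_mulLeft hf t c
  rw [hft, rAct_counit, rAct_eq_sum r] at h
  rw [hsys.apply_mul_eq_apply_sum_mul hdual, ← h]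
  simp [map_sum, rAct_sum_smul]

theorem rAct_eq_antipode_mul_antipode_pow_four_mul (hsys : IsFrobeniusSystem k H f x y)
    (hf : ∀ a, rAct k H f a = f a • 1) {b : H} (hb : ∀ c, lAct k H f c = f c • b)
    (hbG : IsGroupLikeElem k b) {χ : H →ₐ[k] k} (hχ : ∀ a, χ a = f (a * t)) (a : H) :
    rAct k H χ.toLinearMap a =
      antipode k b * antipode k (antipode k (antipode k (antipode k
        (lAct k H χ.toLinearMap a)))) * b := by
  set w := antipode k (antipode k (lAct k H χ.toLinearMap a) * b) * b
  have ha : a = rAct k H (χ.toLinearMap ∘ₗ antipode k) (antipode k (antipode k w)) :=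
    hsys.eq_of_forall_apply_mul_right_eq fun z ↦ by
      rw [apply_mul_eq_apply_mul_antipode_lAct ht hsys hb hχ a z,
        apply_mul_eq_apply_rAct_antipode_mul ht hsys hf hχ z w]
  conv_lhs => rw [ha, rAct_rAct_comp_antipode]
  simp [w, antipode_mul_antidistrib, hbG.antipode_antipode, mul_assoc]

end FrobeniusHopf

theorem stmt_9_general (k : Type*) [CommRing k] (H : Type*) [Ring H] [HopfAlgebra k H]
    (f : H →ₗ[k] k) (nn : ℕ) (x y : Fin nn → H) (hsys : IsFrobeniusSystem k H f x y)
    (hri : ∀ a : H,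
      (TensorProduct.lid k H) ((TensorProduct.map f LinearMap.id) (Coalgebra.comul (R := k) a))
        = f a • (1 : H))
    (t : H) (ht : ∀ a : H, f (t * a) = Coalgebra.counit (R := k) a)
    (m : H →ₗ[k] k) (hm : ∀ a : H, m a = f (a * t))
    (b binv : H) (hb1 : b * binv = 1)
    (hbgl : Coalgebra.comul (R := k) b = b ⊗ₜ[k] b) (hbcu : Coalgebra.counit (R := k) b = 1)
    (hbdist : ∀ (g : H →ₗ[k] k) (c : H), (conv k H g f) c = g b * f c) :
    ∀ a : H,
      HopfAlgebra.antipode (R := k) (HopfAlgebra.antipode (R := k)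
        (HopfAlgebra.antipode (R := k) (HopfAlgebra.antipode (R := k) a))) =
      b * rAct k H m (lAct k H (m ∘ₗ HopfAlgebra.antipode (R := k)) a) * binv := by
  obtain ⟨χ, rfl⟩ : ∃ χ : H →ₐ[k] k, χ.toLinearMap = m :=
    ⟨.ofLinearMap m (by rw [hm, one_mul, apply_norm ht]) fun u v ↦ by
      simp only [hm, apply_mul_norm_mul ht hsys], rfl⟩
  have hbG : IsGroupLikeElem k b := ⟨hbcu, hbgl⟩
  have hSb : antipode k b = binv := left_inv_eq_right_inv hbG.antipode_mul_cancel hb1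
  intro a
  have key := rAct_eq_antipode_mul_antipode_pow_four_mul ht hsys hri
    (lAct_eq_smul_of_conv_eq hsys hbdist) hbG hm (lAct k H (χ.toLinearMap ∘ₗ antipode k) a)
  rw [lAct_lAct_comp_antipode, hSb] at key
  rw [key, ← mul_assoc, ← mul_assoc, hb1, one_mul, mul_assoc, hb1, mul_one]

/-- Radford's formula for the fourth power of the antipode of an FH-algebra `H` over a
commutative ring `k`: with right modular function `m a = f (a * t)` (the right distinguished
group-like of `H*`), its convolution inverse `m⁻¹ = m ∘ S`, and right distinguished group-like
element `b ∈ H`, one has `S⁴(a) = b (m⁻¹ ⇀ a ↼ m) b⁻¹` for all `a ∈ H`. -/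
theorem stmt_9 (k : Type*) [CommRing k] (H : Type*) [Ring H] [HopfAlgebra k H]
    (hfin : Module.Finite k H) (hproj : Module.Projective k H)
    (f : H →ₗ[k] k) (nn : ℕ) (x y : Fin nn → H) (hsys : IsFrobeniusSystem k H f x y)
    (hri : ∀ a : H,
      (TensorProduct.lid k H) ((TensorProduct.map f LinearMap.id) (Coalgebra.comul (R := k) a))
        = f a • (1 : H))
    (t : H) (ht : ∀ a : H, f (t * a) = Coalgebra.counit (R := k) a) (hft : f t = 1)
    (m : H →ₗ[k] k) (hm : ∀ a : H, m a = f (a * t))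
    (b binv : H) (hb1 : b * binv = 1) (hb2 : binv * b = 1)
    (hbgl : Coalgebra.comul (R := k) b = b ⊗ₜ[k] b) (hbcu : Coalgebra.counit (R := k) b = 1)
    (hbdist : ∀ (g : H →ₗ[k] k) (c : H), (conv k H g f) c = g b * f c) :
    ∀ a : H,
      HopfAlgebra.antipode (R := k) (HopfAlgebra.antipode (R := k)
        (HopfAlgebra.antipode (R := k) (HopfAlgebra.antipode (R := k) a))) =
      b * rAct k H m (lAct k H (m ∘ₗ HopfAlgebra.antipode (R := k)) a) * binv :=
  stmt_9_general k H f nn x y hsys hri t ht m hm b binv hb1 hbgl hbcu hbdist
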